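/- Assume r > 10 and let e be a (−1)-class. Then there exists δ ∈ V with ⟨δ,δ⟩ ≥ 0, ⟨δ,L⟩ > 0, ⟨δ,e⟩ = 0 and ⟨δ,K⟩ > 0; that is, the orthogonal complement of e meets Q in a class of strictly positive intersection with K (so e^⊥ ∩ Q is not contained in the half-space {⟨K,·⟩ ≤ 0}). -/

import Mathlib

open scoped BigOperators

/-- The Minkowski intersection form of signature (1,r) on `ℝ^{r+1}`:
`⟨u,v⟩ = u₀v₀ − u₁v₁ − ⋯ − u_r v_r`. -/
noncomputable def mform (r : ℕ) (u v : Fin (r + 1) → ℝ) : ℝ :=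
  u 0 * v 0 - ∑ i : Fin r, u i.succ * v i.succ

/-- The class `L = (1,0,…,0)` of a line. -/
def lclass (r : ℕ) : Fin (r + 1) → ℝ := fun i => if i = 0 then 1 else 0

/-- The canonical class `K = (−3,1,…,1)`. -/
def kclass (r : ℕ) : Fin (r + 1) → ℝ := fun i => if i = 0 then -3 else 1

/-- `Q = {α : ⟨α,α⟩ ≥ 0, ⟨α,L⟩ > 0}`. -/
def Qset (r : ℕ) : Set (Fin (r + 1) → ℝ) :=
  {α | 0 ≤ mform r α α ∧ 0 < mform r α (lclass r)}

/-- `Q̄ = {α : ⟨α,α⟩ ≥ 0, ⟨α,L⟩ ≥ 0}`. -/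
def Qbar (r : ℕ) : Set (Fin (r + 1) → ℝ) :=
  {α | 0 ≤ mform r α α ∧ 0 ≤ mform r α (lclass r)}

/-!
Only the Gram matrix of `L`, `K`, `e` matters. With `d = ⟨e,L⟩ ≥ 0`, take
`δ = x L − K + (x d + 1) e` where `x (3 + d) = r − 21/2`: the coefficient of `e` makes `δ ⊥ e`,
and then `⟨δ,K⟩ = 1/2`, `⟨δ,L⟩ = x + 3 + d + x d² > 0` and `⟨δ,δ⟩ = x² + x² d² + r − 11 ≥ 0`.
-/

open LinearMap (BilinForm)

theorem LinearMap.BilinForm.exists_orthogonal_pos_of_gram {M : Type*} [AddCommGroup M]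
    [Module ℝ M] (B : BilinForm ℝ M) (hB : B.IsSymm) (n : ℝ) (hn : 11 ≤ n) {l k e : M}
    (hll : B l l = 1) (hlk : B l k = -3) (hkk : B k k = 9 - n)
    (hee : B e e = -1) (hek : B e k = -1) (hel : 0 ≤ B e l) :
    ∃ δ : M, 0 ≤ B δ δ ∧ 0 < B δ l ∧ B δ e = 0 ∧ 0 < B δ k := by
  set d := B e l
  have hd : 0 < 3 + d := by linarith
  set x := (n - 21 / 2) / (3 + d)
  have hx : x * (3 + d) = n - 21 / 2 := div_mul_cancel₀ _ hd.ne'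
  have hx0 : 0 ≤ x := div_nonneg (by linarith) hd.le
  have hkl : B k l = -3 := by rw [hB.eq, hlk]
  have hle : B l e = d := hB.eq l e
  have hke : B k e = -1 := by rw [hB.eq, hek]
  refine ⟨x • l - k + (x * d + 1) • e, ?_, ?_, ?_, ?_⟩ <;>
    simp only [map_add, map_sub, map_smul, LinearMap.add_apply, LinearMap.sub_apply,
      LinearMap.smul_apply, smul_eq_mul, hll, hlk, hkk, hee, hek, hkl, hle, hke]
  · nlinarith [sq_nonneg x, sq_nonneg (x * d)]
  · nlinarith [mul_nonneg (mul_nonneg hx0 hel) hel]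
  · ring
  · nlinarith

section Minkowski

variable (r : ℕ)

theorem mform_comm (u v : Fin (r + 1) → ℝ) : mform r u v = mform r v u := by
  simp only [mform, mul_comm]

theorem mform_add_left (u₁ u₂ v : Fin (r + 1) → ℝ) :
    mform r (u₁ + u₂) v = mform r u₁ v + mform r u₂ v := by
  simp only [mform, Pi.add_apply, add_mul, Finset.sum_add_distrib]
  ring

theorem mform_smul_left (c : ℝ) (u v : Fin (r + 1) → ℝ) :
    mform r (c • u) v = c * mform r u v := by
  simp only [mform, Pi.smul_apply, smul_eq_mul, mul_assoc, ← Finset.mul_sum]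
  ring

noncomputable def mformBilin : BilinForm ℝ (Fin (r + 1) → ℝ) :=
  LinearMap.mk₂ ℝ (mform r) (mform_add_left r) (mform_smul_left r)
    (fun u v₁ v₂ => by simp only [mform_comm r u, mform_add_left])
    (fun c u v => by simp only [mform_comm r u, mform_smul_left, smul_eq_mul])

theorem mformBilin_isSymm : (mformBilin r).IsSymm := ⟨mform_comm r⟩

theorem mform_lclass_lclass : mform r (lclass r) (lclass r) = 1 := by
  simp [mform, lclass, Fin.succ_ne_zero]

theorem mform_lclass_kclass : mform r (lclass r) (kclass r) = -3 := by
  simp [mform, lclass, kclass, Fin.succ_ne_zero]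

theorem mform_kclass_kclass : mform r (kclass r) (kclass r) = 9 - r := by
  simp [mform, kclass, Fin.succ_ne_zero]
  norm_num

end Minkowski

theorem stmt11 (r : ℕ) (hr : 10 < r) (e : Fin (r + 1) → ℝ)
    (hee : mform r e e = -1) (heK : mform r e (kclass r) = -1)
    (heL : 0 ≤ mform r e (lclass r)) :
    ∃ δ : Fin (r + 1) → ℝ, 0 ≤ mform r δ δ ∧ 0 < mform r δ (lclass r) ∧
      mform r δ e = 0 ∧ 0 < mform r δ (kclass r) :=
  BilinForm.exists_orthogonal_pos_of_gram (mformBilin r) (mformBilin_isSymm r) r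
    (by exact_mod_cast hr) (mform_lclass_lclass r) (mform_lclass_kclass r) (mform_kclass_kclass r) hee heK heL
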